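/- Let y ∈ ℝ₊^{2m+1} have strictly positive components, let x⁰ ∈ ℝ^{m+1} be strictly positive, and define the iterates x^{t+1} = T(x^t) for t ≥ 0. If x^∞ and x' are two limit points of the sequence (x^t) (limits along subsequences) such that (x^∞*x^∞)_i > 0 and (x'*x')_i > 0 for all i = 0,…,2m, then I(y‖x^∞*x^∞) = I(y‖x'*x'); i.e., the objective value is constant over the set of limit points. -/

import Mathlib

/-!
The iteration is a majorize–minimize scheme. For positive `x` let `Y*(x)` split each `y_i`
over the pairs `(i - j, j)` proportionally to `x_{i-j} x_j`. By the log-sum inequality,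
`I(y ‖ v*v) ≤ I(Y*(x) ‖ W(v))` for every positive `v`, with equality at `v = x`, and as a
function of `v` the right-hand side is `(∑ v)² - ∑_j Ŷ_j log v_j` up to a constant, which is
minimized exactly at `T(x) = Ŷ / (2c)`. Hence `I(y ‖ x^t * x^t)` is nonincreasing in `t`, so it converges
along the whole sequence; by continuity at limit points with positive autoconvolution, the
value at each such limit point is that common limit.
-/

open Finset Filter

/-- Extension of `x : Fin (m+1) → ℝ` to `ℕ`, zero outside `[0, m]`. -/
def ext (m : ℕ) (x : Fin (m + 1) → ℝ) (k : ℕ) : ℝ :=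
  if h : k < m + 1 then x ⟨k, h⟩ else 0

/-- Autoconvolution `(x*x)_i = ∑_{j=0}^{i} x_{i-j} x_j`. -/
def aconv (m : ℕ) (x : Fin (m + 1) → ℝ) : Fin (2 * m + 1) → ℝ :=
  fun i => ∑ j ∈ Finset.range (i.1 + 1), ext m x (i.1 - j) * ext m x j

/-- The index `ℓ + j ∈ {0,…,2m}` for `ℓ, j ∈ {0,…,m}`. -/
def idx (m : ℕ) (ℓ j : Fin (m + 1)) : Fin (2 * m + 1) :=
  ⟨ℓ.1 + j.1, by have h1 := ℓ.isLt; have h2 := j.isLt; omega⟩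

/-- One term of the I-divergence, with values in `[0,∞]`, with the conventions
`0·log(0/b) = 0` and value `∞` if `a > 0 = b`. -/
noncomputable def termDiv (a b : ℝ) : ENNReal :=
  if a = 0 then ENNReal.ofReal b
  else if b = 0 then ⊤
  else ENNReal.ofReal (a * Real.log (a / b) - a + b)

/-- `[0,∞]`-valued I-divergence between vectors. -/
noncomputable def Idiv {n : ℕ} (u v : Fin n → ℝ) : ENNReal :=
  ∑ i, termDiv (u i) (v i)

/-- Real-valued I-divergence between vectors (used when the second argument is
positive wherever the first one is). -/
noncomputable def IdivR {n : ℕ} (u v : Fin n → ℝ) : ℝ :=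
  ∑ i, (u i * Real.log (u i / v i) - u i + v i)

/-- `[0,∞]`-valued I-divergence between `(2m+1) × (m+1)` matrices. -/
noncomputable def IdivM (m : ℕ) (M N : Fin (2 * m + 1) → Fin (m + 1) → ℝ) : ENNReal :=
  ∑ i, ∑ j, termDiv (M i j) (N i j)

/-- Real-valued I-divergence between `(2m+1) × (m+1)` matrices. -/
noncomputable def IdivMR (m : ℕ) (M N : Fin (2 * m + 1) → Fin (m + 1) → ℝ) : ℝ :=
  ∑ i, ∑ j, (M i j * Real.log (M i j / N i j) - M i j + N i j)

/-- The set 𝒴: nonnegative matrices supported on `{(i,j) : j ≤ i ≤ j+m}` with row sums `y`. -/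
def calY (m : ℕ) (y : Fin (2 * m + 1) → ℝ) (Y : Fin (2 * m + 1) → Fin (m + 1) → ℝ) : Prop :=
  (∀ i j, 0 ≤ Y i j) ∧
  (∀ (i : Fin (2 * m + 1)) (j : Fin (m + 1)), ¬(j.1 ≤ i.1 ∧ i.1 ≤ j.1 + m) → Y i j = 0) ∧
  (∀ i, ∑ j, Y i j = y i)

/-- The matrix `W(x)` with `W(x)_{ij} = x_{i-j} x_j` on the support and `0` elsewhere. -/
def Wmat (m : ℕ) (x : Fin (m + 1) → ℝ) (i : Fin (2 * m + 1)) (j : Fin (m + 1)) : ℝ :=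
  if h : j.1 ≤ i.1 ∧ i.1 ≤ j.1 + m then x ⟨i.1 - j.1, by omega⟩ * x j else 0

/-- The matrix `Y*(x)` with `Y*(x)_{ij} = (x_{i-j} x_j/(x*x)_i)·y_i` on the support. -/
noncomputable def Ystar (m : ℕ) (y : Fin (2 * m + 1) → ℝ) (x : Fin (m + 1) → ℝ)
    (i : Fin (2 * m + 1)) (j : Fin (m + 1)) : ℝ :=
  if h : j.1 ≤ i.1 ∧ i.1 ≤ j.1 + m then
    x ⟨i.1 - j.1, by omega⟩ * x j / aconv m x i * y i
  else 0

/-- `Ŷ_j = ∑_{i=0}^{m} Y_{i+j,i} + ∑_{i=j}^{j+m} Y_{ij}`. -/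
def Yhat (m : ℕ) (Y : Fin (2 * m + 1) → Fin (m + 1) → ℝ) (j : Fin (m + 1)) : ℝ :=
  (∑ ℓ : Fin (m + 1), Y (idx m ℓ j) ℓ) + ∑ ℓ : Fin (m + 1), Y (idx m ℓ j) j

/-- The algorithm map `T(x)_j = x_j (1/c) ∑_ℓ x_ℓ y_{ℓ+j}/(x*x)_{ℓ+j}`,
with `c = √(∑ y_i)`. -/
noncomputable def Tmap (m : ℕ) (y : Fin (2 * m + 1) → ℝ) (x : Fin (m + 1) → ℝ)
    (j : Fin (m + 1)) : ℝ :=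
  x j * (1 / Real.sqrt (∑ i, y i)) * ∑ ℓ, x ℓ * y (idx m ℓ j) / aconv m x (idx m ℓ j)

/-- The gradient `∇_j I(x) = 2 ∑_ℓ ( x_ℓ − x_ℓ y_{ℓ+j}/(x*x)_{ℓ+j} )`. -/
noncomputable def gradI (m : ℕ) (y : Fin (2 * m + 1) → ℝ) (x : Fin (m + 1) → ℝ)
    (j : Fin (m + 1)) : ℝ :=
  2 * ∑ ℓ, (x ℓ - x ℓ * y (idx m ℓ j) / aconv m x (idx m ℓ j))

section Autoconvolution

variable {m : ℕ}

lemma ext_of_lt (x : Fin (m + 1) → ℝ) {k : ℕ} (h : k < m + 1) :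
    _root_.ext m x k = x ⟨k, h⟩ :=
  dif_pos h

lemma ext_of_not_lt (x : Fin (m + 1) → ℝ) {k : ℕ} (h : ¬k < m + 1) : _root_.ext m x k = 0 :=
  dif_neg h

lemma aconv_pos {x : Fin (m + 1) → ℝ} (hx : ∀ j, 0 < x j) (i : Fin (2 * m + 1)) :
    0 < aconv m x i := by
  have hext : ∀ k, 0 ≤ _root_.ext m x k := fun k => by
    unfold _root_.ext; split <;> simp [(hx _).le]
  -- the term with `j = i - min i m` has both indices in `[0, m]`
  refine Finset.sum_pos' (fun j _ => mul_nonneg (hext _) (hext _))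
    ⟨i.1 - min i.1 m, Finset.mem_range.2 (by omega), ?_⟩
  have hi := i.isLt
  rw [ext_of_lt x (k := i.1 - (i.1 - min i.1 m)) (by omega), ext_of_lt x (by omega)]
  exact mul_pos (hx _) (hx _)

lemma continuous_aconv : Continuous (aconv m) := by
  have hext : ∀ k, Continuous fun x : Fin (m + 1) → ℝ => _root_.ext m x k := fun k => by
    unfold _root_.ext; split
    · exact continuous_apply _
    · exact continuous_const
  exact continuous_pi fun i => continuous_finsetSum _ fun k _ => (hext _).mul (hext _)

lemma sum_Wmat (x : Fin (m + 1) → ℝ) (i : Fin (2 * m + 1)) :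
    ∑ j, Wmat m x i j = aconv m x i := by
  have hi := i.isLt
  set g : ℕ → ℝ := fun k =>
    if k ≤ i.1 then _root_.ext m x (i.1 - k) * _root_.ext m x k else 0
  have hg : ∀ k, ¬(k < m + 1 ∧ k < i.1 + 1) → g k = 0 := fun k hk => by
    by_cases hki : k ≤ i.1
    · simp [g, hki, ext_of_not_lt x (show ¬k < m + 1 by omega)]
    · simp [g, hki]
  have hrange : ∀ n, n ≤ 2 * m + 1 → (∀ k, ¬k < n → g k = 0) →
      ∑ k ∈ Finset.range n, g k = ∑ k ∈ Finset.range (2 * m + 1), g k := fun n hn h =>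
    Finset.sum_subset (Finset.range_subset_range.2 hn) fun k _ hk => h k (by simpa using hk)
  calc ∑ j, Wmat m x i j = ∑ k ∈ Finset.range (m + 1), g k := by
        rw [← Fin.sum_univ_eq_sum_range]
        refine Finset.sum_congr rfl fun j _ => ?_
        by_cases hs : j.1 ≤ i.1 ∧ i.1 ≤ j.1 + m
        · simp [Wmat, g, hs, ext_of_lt x (show i.1 - j.1 < m + 1 by omega), ext_of_lt x j.isLt]
        · rw [Wmat, dif_neg hs]
          by_cases hji : j.1 ≤ i.1
          · simp [g, hji, ext_of_not_lt x (show ¬i.1 - j.1 < m + 1 by omega)]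
          · simp [g, hji]
    _ = ∑ k ∈ Finset.range (i.1 + 1), g k := by
        rw [hrange (m + 1) (by omega) fun k hk => hg k (by omega),
          hrange (i.1 + 1) (by omega) fun k hk => hg k (by omega)]
    _ = aconv m x i := Finset.sum_congr rfl fun k hk => by
        simp [g, show k ≤ i.1 by simp at hk; omega]

end Autoconvolution

section Matrices

variable {m : ℕ}

lemma idx_comm (ℓ j : Fin (m + 1)) : idx m ℓ j = idx m j ℓ :=
  Fin.ext (Nat.add_comm _ _)

lemma sum_idx_eq_sum {F : Fin (2 * m + 1) → ℝ} (j : Fin (m + 1))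
    (hF : ∀ i, ¬(j.1 ≤ i.1 ∧ i.1 ≤ j.1 + m) → F i = 0) :
    ∑ ℓ, F (idx m ℓ j) = ∑ i, F i := by
  refine Finset.sum_of_injOn (idx m · j)
    (fun a _ b _ h => Fin.ext (by simpa [idx] using congrArg Fin.val h))
    (fun _ _ => Finset.mem_univ _) (fun i _ hi => hF i fun hs => hi ?_) (fun _ _ => rfl)
  exact ⟨⟨i.1 - j.1, by omega⟩, Finset.mem_coe.2 (Finset.mem_univ _),
    Fin.ext (by simp [idx]; omega)⟩

lemma Wmat_idx (v : Fin (m + 1) → ℝ) (ℓ j : Fin (m + 1)) :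
    Wmat m v (idx m ℓ j) j = v ℓ * v j := by
  have hs : j.1 ≤ (idx m ℓ j).1 ∧ (idx m ℓ j).1 ≤ j.1 + m := by simp [idx]; omega
  simp only [Wmat, dif_pos hs]
  congr 2
  exact Fin.ext (by simp [idx])

lemma Ystar_eq_Wmat_div_mul (y : Fin (2 * m + 1) → ℝ) (x : Fin (m + 1) → ℝ)
    (i : Fin (2 * m + 1)) (j : Fin (m + 1)) :
    Ystar m y x i j = Wmat m x i j / aconv m x i * y i := by
  unfold Ystar Wmat; split <;> simp

lemma sum_Ystar (y : Fin (2 * m + 1) → ℝ) {x : Fin (m + 1) → ℝ} (hx : ∀ j, 0 < x j)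
    (i : Fin (2 * m + 1)) : ∑ j, Ystar m y x i j = y i := by
  simp only [Ystar_eq_Wmat_div_mul, ← Finset.sum_mul, ← Finset.sum_div, sum_Wmat,
    div_self (aconv_pos hx i).ne', one_mul]

lemma Ystar_mem_calY {y : Fin (2 * m + 1) → ℝ} (hy : ∀ i, 0 ≤ y i) {x : Fin (m + 1) → ℝ}
    (hx : ∀ j, 0 < x j) : calY m y (Ystar m y x) := by
  refine ⟨fun i j => ?_, fun i j hs => dif_neg hs, sum_Ystar y hx⟩
  unfold Ystar; split
  · exact mul_nonneg (div_nonneg (mul_pos (hx _) (hx _)).le (aconv_pos hx i).le) (hy i)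
  · exact le_rfl

lemma sum_Yhat {y : Fin (2 * m + 1) → ℝ} {Y : Fin (2 * m + 1) → Fin (m + 1) → ℝ}
    (hY : calY m y Y) : ∑ j, Yhat m Y j = 2 * ∑ i, y i := by
  have hcol : ∀ j, ∑ ℓ, Y (idx m ℓ j) j = ∑ i, Y i j := fun j =>
    sum_idx_eq_sum j fun i hi => hY.2.1 i j hi
  have htot : ∑ j, ∑ i, Y i j = ∑ i, y i := by
    rw [Finset.sum_comm]; exact Finset.sum_congr rfl fun i _ => hY.2.2 i
  have hswap : ∑ j, ∑ ℓ, Y (idx m ℓ j) ℓ = ∑ ℓ, ∑ j, Y (idx m j ℓ) ℓ := by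
    rw [Finset.sum_comm]; simp only [idx_comm]
  simp only [Yhat, Finset.sum_add_distrib, hswap, hcol, htot]
  ring

lemma Tmap_eq_Yhat_Ystar (y : Fin (2 * m + 1) → ℝ) (x : Fin (m + 1) → ℝ) (j : Fin (m + 1)) :
    Tmap m y x j = Yhat m (Ystar m y x) j / (2 * √(∑ i, y i)) := by
  have hYhat : Yhat m (Ystar m y x) j =
      2 * (x j * ∑ ℓ, x ℓ * y (idx m ℓ j) / aconv m x (idx m ℓ j)) := by
    have hrow : ∀ ℓ, Wmat m x (idx m ℓ j) ℓ = x j * x ℓ := fun ℓ => by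
      rw [idx_comm, Wmat_idx]
    simp only [Yhat, Ystar_eq_Wmat_div_mul, hrow, Wmat_idx, Finset.mul_sum,
      ← Finset.sum_add_distrib]
    exact Finset.sum_congr rfl fun ℓ _ => by ring
  rw [hYhat, mul_div_mul_left _ _ two_ne_zero, Tmap]
  ring

lemma Tmap_pos {y : Fin (2 * m + 1) → ℝ} (hy : ∀ i, 0 < y i) {x : Fin (m + 1) → ℝ}
    (hx : ∀ j, 0 < x j) (j : Fin (m + 1)) : 0 < Tmap m y x j := by
  have hc : 0 < √(∑ i, y i) := Real.sqrt_pos.2 (Finset.sum_pos (fun i _ => hy i) univ_nonempty)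
  have hsum : 0 < ∑ ℓ, x ℓ * y (idx m ℓ j) / aconv m x (idx m ℓ j) :=
    Finset.sum_pos (fun ℓ _ => div_pos (mul_pos (hx ℓ) (hy _)) (aconv_pos hx _)) univ_nonempty
  exact mul_pos (mul_pos (hx j) (one_div_pos.2 hc)) hsum

end Matrices

section LogSum

open Real

lemma mul_log_add_sub_le_mul_log_div {p q r : ℝ} (hr : 0 < r) (hp : 0 ≤ p) (hq : 0 ≤ q)
    (hpq : q = 0 → p = 0) : p * log r + p - r * q ≤ p * log (p / q) := by
  rcases hp.eq_or_lt with rfl | hp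
  · simpa using mul_nonneg hr.le hq
  have hq : 0 < q := hq.lt_of_ne fun h => hp.ne' (hpq h.symm)
  -- `log t ≤ t - 1` at `t = r q / p`
  have h := mul_le_mul_of_nonneg_left (log_le_sub_one_of_pos (by positivity : 0 < r * q / p)) hp.le
  rw [log_div (by positivity) hp.ne', log_mul hr.ne' hq.ne', log_div hp.ne' hq.ne'] at *
  have hcancel : p * (r * q / p - 1) = r * q - p := by field_simp
  linarith

lemma mul_log_div_le_sum_mul_log_div {ι : Type*} [Fintype ι] {f g : ι → ℝ}
    (hf : ∀ i, 0 ≤ f i) (hg : ∀ i, 0 ≤ g i) (hfg : ∀ i, g i = 0 → f i = 0)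
    (hF : 0 < ∑ i, f i) (hG : 0 < ∑ i, g i) :
    (∑ i, f i) * log ((∑ i, f i) / ∑ i, g i) ≤ ∑ i, f i * log (f i / g i) := by
  set r := (∑ i, f i) / ∑ i, g i
  have hr : 0 < r := div_pos hF hG
  calc (∑ i, f i) * log r = ∑ i, (f i * log r + f i - r * g i) := by
        simp only [Finset.sum_sub_distrib, Finset.sum_add_distrib, ← Finset.sum_mul,
          ← Finset.mul_sum, r, div_mul_cancel₀ _ hG.ne']
        ring
    _ ≤ ∑ i, f i * log (f i / g i) := Finset.sum_le_sum fun i _ =>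
        mul_log_add_sub_le_mul_log_div hr (hf i) (hg i) (hfg i)

lemma sq_sum_sub_sum_mul_log_le {ι : Type*} [Fintype ι] {h : ι → ℝ} {c : ℝ} (hc : 0 < c)
    (hh : ∀ i, 0 ≤ h i) (hsum : ∑ i, h i = 2 * c ^ 2) {v : ι → ℝ} (hv : ∀ i, 0 < v i) :
    (∑ i, h i / (2 * c)) ^ 2 - ∑ i, h i * log (h i / (2 * c))
      ≤ (∑ i, v i) ^ 2 - ∑ i, h i * log (v i) := by
  have hu : ∑ i, h i / (2 * c) = c := by
    rw [← Finset.sum_div, hsum]; field_simp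
  have htangent := Finset.sum_le_sum fun i (_ : i ∈ Finset.univ) =>
    mul_log_add_sub_le_mul_log_div (hv i) (hh i) (by positivity : 0 ≤ 2 * c)
      fun h0 => absurd h0 (by positivity)
  simp only [Finset.sum_sub_distrib, Finset.sum_add_distrib, ← Finset.sum_mul, hsum] at htangent
  rw [hu]
  nlinarith [sq_nonneg (∑ i, v i - c)]

end LogSum

section Surrogate

open Real

variable {m : ℕ}

lemma Wmat_pos {v : Fin (m + 1) → ℝ} (hv : ∀ j, 0 < v j) {i : Fin (2 * m + 1)}
    {j : Fin (m + 1)} (hs : j.1 ≤ i.1 ∧ i.1 ≤ j.1 + m) : 0 < Wmat m v i j := by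
  rw [Wmat, dif_pos hs]; exact mul_pos (hv _) (hv _)

lemma sum_sum_Wmat (v : Fin (m + 1) → ℝ) : ∑ i, ∑ j, Wmat m v i j = (∑ j, v j) ^ 2 := by
  rw [Finset.sum_comm, sq, Finset.sum_mul]
  refine Finset.sum_congr rfl fun j _ => ?_
  rw [← sum_idx_eq_sum (F := fun i => Wmat m v i j) j fun i hs => dif_neg hs, Finset.mul_sum]
  exact Finset.sum_congr rfl fun ℓ _ => by rw [Wmat_idx, mul_comm]

lemma sum_sum_mul_log_Wmat {Y : Fin (2 * m + 1) → Fin (m + 1) → ℝ}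
    (hY : ∀ i j, ¬(j.1 ≤ i.1 ∧ i.1 ≤ j.1 + m) → Y i j = 0) {v : Fin (m + 1) → ℝ}
    (hv : ∀ j, 0 < v j) :
    ∑ i, ∑ j, Y i j * log (Wmat m v i j) = ∑ j, Yhat m Y j * log (v j) := by
  have hcol : ∀ j, ∑ i, Y i j * log (Wmat m v i j)
      = ∑ ℓ, Y (idx m ℓ j) j * log (v ℓ) + ∑ ℓ, Y (idx m ℓ j) j * log (v j) := by
    intro j
    rw [← sum_idx_eq_sum j fun i hs => by rw [hY i j hs, zero_mul], ← Finset.sum_add_distrib]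
    refine Finset.sum_congr rfl fun ℓ _ => ?_
    rw [Wmat_idx, log_mul (hv ℓ).ne' (hv j).ne']
    ring
  have hswap : ∑ j, ∑ ℓ, Y (idx m ℓ j) j * log (v ℓ)
      = ∑ j, ∑ ℓ, Y (idx m ℓ j) ℓ * log (v j) := by
    rw [Finset.sum_comm]; simp only [idx_comm]
  rw [Finset.sum_comm]
  simp only [hcol, Finset.sum_add_distrib, hswap, Yhat, add_mul, Finset.sum_mul]

lemma IdivMR_Wmat_eq {Y : Fin (2 * m + 1) → Fin (m + 1) → ℝ}
    (hY : ∀ i j, ¬(j.1 ≤ i.1 ∧ i.1 ≤ j.1 + m) → Y i j = 0) {v : Fin (m + 1) → ℝ}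
    (hv : ∀ j, 0 < v j) :
    IdivMR m Y (Wmat m v) = ∑ i, ∑ j, (Y i j * log (Y i j) - Y i j)
      + ((∑ j, v j) ^ 2 - ∑ j, Yhat m Y j * log (v j)) := by
  have hentry : ∀ i j, Y i j * log (Y i j / Wmat m v i j) - Y i j + Wmat m v i j
      = (Y i j * log (Y i j) - Y i j) - Y i j * log (Wmat m v i j) + Wmat m v i j := by
    intro i j
    by_cases h0 : Y i j = 0
    · simp [h0]
    · have hs : j.1 ≤ i.1 ∧ i.1 ≤ j.1 + m := by_contra fun hs => h0 (hY i j hs)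
      rw [log_div h0 (Wmat_pos hv hs).ne']
      ring
  simp only [IdivMR, hentry, Finset.sum_add_distrib, Finset.sum_sub_distrib,
    sum_sum_mul_log_Wmat hY hv, sum_sum_Wmat]
  ring

lemma IdivR_aconv_le_IdivMR {y : Fin (2 * m + 1) → ℝ} (hy : ∀ i, 0 < y i)
    {Y : Fin (2 * m + 1) → Fin (m + 1) → ℝ} (hY : calY m y Y) {v : Fin (m + 1) → ℝ}
    (hv : ∀ j, 0 < v j) : IdivR y (aconv m v) ≤ IdivMR m Y (Wmat m v) := by
  obtain ⟨hY0, hYsupp, hYrow⟩ := hY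
  refine Finset.sum_le_sum fun i _ => ?_
  have hlogsum := mul_log_div_le_sum_mul_log_div (hY0 i) (fun j => ?_) (fun j hW => ?_)
    ((hYrow i).symm ▸ hy i) ((sum_Wmat v i).symm ▸ aconv_pos hv i)
  · simp only [Finset.sum_add_distrib, Finset.sum_sub_distrib, hYrow, sum_Wmat] at hlogsum ⊢
    linarith
  · unfold Wmat; split
    · exact mul_nonneg (hv _).le (hv _).le
    · exact le_rfl
  · exact hYsupp i j fun hs => (Wmat_pos hv hs).ne' hW

lemma IdivMR_Ystar_Wmat_self (y : Fin (2 * m + 1) → ℝ) {x : Fin (m + 1) → ℝ}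
    (hx : ∀ j, 0 < x j) : IdivMR m (Ystar m y x) (Wmat m x) = IdivR y (aconv m x) := by
  refine Finset.sum_congr rfl fun i _ => ?_
  have hterm : ∀ j, Ystar m y x i j * log (Ystar m y x i j / Wmat m x i j)
      = Ystar m y x i j * log (y i / aconv m x i) := fun j => by
    by_cases hs : j.1 ≤ i.1 ∧ i.1 ≤ j.1 + m
    · have hW := (Wmat_pos hx hs).ne'
      rw [Ystar_eq_Wmat_div_mul]
      congr 2
      field_simp
    · rw [show Ystar m y x i j = 0 from dif_neg hs, zero_mul, zero_mul]
  simp only [Finset.sum_add_distrib, Finset.sum_sub_distrib, hterm, ← Finset.sum_mul,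
    sum_Ystar y hx, sum_Wmat]

end Surrogate

lemma IdivR_aconv_Tmap_le {m : ℕ} {y : Fin (2 * m + 1) → ℝ} (hy : ∀ i, 0 < y i)
    {x : Fin (m + 1) → ℝ} (hx : ∀ j, 0 < x j) :
    IdivR y (aconv m (Tmap m y x)) ≤ IdivR y (aconv m x) := by
  set Y := Ystar m y x
  set c := √(∑ i, y i)
  have hY : calY m y Y := Ystar_mem_calY (fun i => (hy i).le) hx
  have hsy : 0 ≤ ∑ i, y i := Finset.sum_nonneg fun i _ => (hy i).le
  have hc : 0 < c := Real.sqrt_pos.2 (Finset.sum_pos (fun i _ => hy i) univ_nonempty)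
  have hYhat : ∑ j, Yhat m Y j = 2 * c ^ 2 := by rw [sum_Yhat hY, Real.sq_sqrt hsy]
  have hYhat_nonneg : ∀ j, 0 ≤ Yhat m Y j := fun j =>
    add_nonneg (Finset.sum_nonneg fun _ _ => hY.1 _ _) (Finset.sum_nonneg fun _ _ => hY.1 _ _)
  have hT : Tmap m y x = fun j => Yhat m Y j / (2 * c) := funext (Tmap_eq_Yhat_Ystar y x)
  calc IdivR y (aconv m (Tmap m y x)) ≤ IdivMR m Y (Wmat m (Tmap m y x)) :=
        IdivR_aconv_le_IdivMR hy hY (Tmap_pos hy hx)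
    _ ≤ IdivMR m Y (Wmat m x) := by
        rw [IdivMR_Wmat_eq hY.2.1 (Tmap_pos hy hx), IdivMR_Wmat_eq hY.2.1 hx, hT]
        exact add_le_add_right (sq_sum_sub_sum_mul_log_le hc hYhat_nonneg hYhat hx) _
    _ = IdivR y (aconv m x) := IdivMR_Ystar_Wmat_self y hx

lemma Antitone.tendsto_of_tendsto_comp {α : Type*} [ConditionallyCompleteLinearOrder α]
    [TopologicalSpace α] [OrderTopology α] {f : ℕ → α} (hf : Antitone f) {φ : ℕ → ℕ}
    (hφ : StrictMono φ) {L : α} (h : Tendsto (f ∘ φ) atTop (nhds L)) :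
    Tendsto f atTop (nhds L) := by
  have hbdd : BddBelow (Set.range f) := ⟨L, Set.forall_mem_range.2 fun n =>
    ((hf.comp_monotone hφ.monotone).le_of_tendsto h n).trans (hf (hφ.id_le n))⟩
  have hinf := tendsto_atTop_ciInf hf hbdd
  rwa [tendsto_nhds_unique h (hinf.comp hφ.tendsto_atTop)]

lemma continuousAt_IdivR {n : ℕ} (u : Fin n → ℝ) {v : Fin n → ℝ} (hv : ∀ i, v i ≠ 0) :
    ContinuousAt (IdivR u) v := by
  refine tendsto_finsetSum _ fun i _ => ?_
  by_cases hu : u i = 0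
  · simp only [hu, zero_mul, zero_sub, neg_zero, zero_add]
    exact (continuous_apply i).continuousAt
  · exact ((continuousAt_const.mul ((continuousAt_const.div (continuous_apply i).continuousAt
      (hv i)).log (div_ne_zero hu (hv i)))).sub continuousAt_const).add
      (continuous_apply i).continuousAt

/-- the objective value is constant over the set of limit points
of the iterates. -/
theorem stmt17 (m : ℕ) (y : Fin (2 * m + 1) → ℝ) (hy : ∀ i, 0 < y i)
    (xs : ℕ → Fin (m + 1) → ℝ) (h0 : ∀ j, 0 < xs 0 j)
    (hstep : ∀ t, xs (t + 1) = Tmap m y (xs t))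
    (xinf x' : Fin (m + 1) → ℝ)
    (hcinf : ∀ i, 0 < aconv m xinf i) (hc' : ∀ i, 0 < aconv m x' i)
    (hliminf : ∃ φ : ℕ → ℕ, StrictMono φ ∧
      Filter.Tendsto (fun k => xs (φ k)) Filter.atTop (nhds xinf))
    (hlim' : ∃ ψ : ℕ → ℕ, StrictMono ψ ∧
      Filter.Tendsto (fun k => xs (ψ k)) Filter.atTop (nhds x')) :
    IdivR y (aconv m xinf) = IdivR y (aconv m x') := by
  obtain ⟨φ, hφ, hφlim⟩ := hliminf
  obtain ⟨ψ, hψ, hψlim⟩ := hlim'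
  set F : (Fin (m + 1) → ℝ) → ℝ := fun x => IdivR y (aconv m x)
  have hpos : ∀ t j, 0 < xs t j := by
    intro t
    induction t with
    | zero => exact h0
    | succ t ih => rw [hstep]; exact Tmap_pos hy ih
  have hanti : Antitone (F ∘ xs) := antitone_nat_of_succ_le fun t => by
    simp only [Function.comp, F, hstep t]; exact IdivR_aconv_Tmap_le hy (hpos t)
  have hF : ∀ z, (∀ i, 0 < aconv m z i) → ContinuousAt F z := fun z hz =>
    (continuousAt_IdivR y fun i => (hz i).ne').comp continuous_aconv.continuousAt
  exact tendsto_nhds_unique (hanti.tendsto_of_tendsto_comp hφ ((hF _ hcinf).tendsto.comp hφlim))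
    (hanti.tendsto_of_tendsto_comp hψ ((hF _ hc').tendsto.comp hψlim))
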